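/- arXiv:1202.3208 — 3 statements merged into one kernel-verified Lean document; each statement's English description precedes it below -/
import Mathlib

section
/- Let S be a string of length n and P a pattern. The set of lexicographic ranks of suffixes of S that have P as a prefix forms a (possibly empty) contiguous interval in the lexicographic ordering of all suffixes of S. -/
/-- The list of suffixes of `S`, sorted lexicographically. -/
def sortedSuffixes {α : Type*} [LinearOrder α] (S : List α) : List (List α) :=
  ((List.range S.length).map (fun i => S.drop i)).mergeSort (fun x y => decide (x ≤ y))

/-! Lexicographic order is compatible with prefixes: a list lying between two lists that both
start with `P` starts with `P` as well. Hence the sorted suffixes starting with `P` occupy an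
order-connected set of ranks, and an order-connected finite set of naturals is an interval. -/

theorem List.ordConnected_setOf_isPrefix {α : Type*} [LinearOrder α] (P : List α) :
    {l : List α | P <+: l}.OrdConnected := by
  induction P with
  | nil => simpa using Set.ordConnected_univ
  | cons a P ih =>
    refine ⟨fun x hx z hz y ⟨hxy, hyz⟩ => ?_⟩
    obtain ⟨x', rfl, hx'⟩ : ∃ x', x = a :: x' ∧ P <+: x' := by
      cases x <;> simp_all [List.cons_prefix_cons]
    obtain ⟨z', rfl, hz'⟩ : ∃ z', z = a :: z' ∧ P <+: z' := by
      cases z <;> simp_all [List.cons_prefix_cons]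
    cases y with
    | nil => exact absurd (List.Lex.nil : [] < a :: x') (not_lt.mpr hxy)
    | cons b y' =>
      obtain rfl : a = b := by
        rcases lt_trichotomy a b with h | h | h
        · exact absurd (List.Lex.rel h : a :: z' < b :: y') (not_lt.mpr hyz)
        · exact h
        · exact absurd (List.Lex.rel h : b :: y' < a :: x') (not_lt.mpr hxy)
      have hx'y' : x' ≤ y' := not_lt.mp fun h => not_lt.mpr hxy (List.Lex.cons h)
      have hy'z' : y' ≤ z' := not_lt.mp fun h => not_lt.mpr hyz (List.Lex.cons h)
      exact List.cons_prefix_cons.mpr ⟨rfl, ih.out hx' hz' ⟨hx'y', hy'z'⟩⟩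

theorem Finset.exists_eq_Ico_of_ordConnected {s : Finset ℕ} (hs : (s : Set ℕ).OrdConnected) :
    ∃ lo hi, s = Finset.Ico lo hi := by
  rcases s.eq_empty_or_nonempty with rfl | hne
  · exact ⟨0, 0, by simp⟩
  refine ⟨s.min' hne, s.max' hne + 1, Finset.ext fun r => ?_⟩
  rw [Finset.mem_Ico, Nat.lt_succ_iff]
  exact ⟨fun hr => ⟨s.min'_le r hr, s.le_max' r hr⟩,
    fun hr => by exact_mod_cast hs.out (s.min'_mem hne) (s.max'_mem hne) hr⟩

theorem List.Pairwise.monotoneOn_getD {β : Type*} [Preorder β] {L : List β}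
    (hL : L.Pairwise (· ≤ ·)) (d : β) :
    MonotoneOn (fun r => L.getD r d) (Set.Iio L.length) := by
  intro i hi j hj hij
  simp only [List.getD_eq_getElem _ _ hi, List.getD_eq_getElem _ _ hj]
  exact hL.rel_get_of_le (a := ⟨i, hi⟩) (b := ⟨j, hj⟩) hij

theorem List.Pairwise.exists_filter_range_eq_Ico {β : Type*} [Preorder β] {L : List β}
    (hL : L.Pairwise (· ≤ ·)) (d : β) {p : β → Prop} [DecidablePred p]
    (hp : {b | p b}.OrdConnected) :
    ∃ lo hi, (Finset.range L.length).filter (fun r => p (L.getD r d)) = Finset.Ico lo hi := by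
  apply Finset.exists_eq_Ico_of_ordConnected
  obtain ⟨u, hu, htu⟩ := hp.preimage_monotoneOn (hL.monotoneOn_getD d)
  have hcoe : ((Finset.range L.length).filter (fun r => p (L.getD r d)) : Set ℕ)
      = Set.Iio L.length ∩ (fun r => L.getD r d) ⁻¹' {b | p b} := by
    ext r
    simp
  rw [hcoe, htu]
  exact Set.OrdConnected.inter inferInstance hu

theorem pairwise_sortedSuffixes {α : Type*} [LinearOrder α] (S : List α) :
    (sortedSuffixes S).Pairwise (· ≤ ·) :=
  List.pairwise_mergeSort' (· ≤ ·) _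

theorem length_sortedSuffixes {α : Type*} [LinearOrder α] (S : List α) :
    (sortedSuffixes S).length = S.length := by
  simp [sortedSuffixes, List.length_mergeSort]

theorem stmt2_general {α : Type*} [LinearOrder α] (S P : List α) :
    ∃ lo hi : ℕ,
      (Finset.range S.length).filter (fun r => P <+: (sortedSuffixes S).getD r [])
        = Finset.Ico lo hi := by
  rw [← length_sortedSuffixes S]
  exact (pairwise_sortedSuffixes S).exists_filter_range_eq_Ico []
    (List.ordConnected_setOf_isPrefix P)

/-- the set of lexicographic ranks of suffixes of `S` having `P` as a prefix
forms a (possibly empty) contiguous interval. -/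
theorem stmt2 {α : Type*} [LinearOrder α] (S P : List α)
    (hdist : ((List.range S.length).map (fun i => S.drop i)).Nodup) :
    ∃ lo hi : ℕ,
      (Finset.range S.length).filter (fun r => P <+: (sortedSuffixes S).getD r [])
        = Finset.Ico lo hi :=
  stmt2_general S P
end

section
/- Let S be a string with labels ℓ, and for a string w let Occ(w) = {i : w occurs in S at position i}. Define S_w as the sequence of characters S[i + |w|] for i ∈ Occ(w) (taking a sentinel $ when i + |w| > |S|), where the positions i are listed sorted by ℓ(i). Then for any character c and string α, the subsequence of S_w consisting of its occurrences of c, with each such character S[i+|w|] = c replaced by S[i + |w| + |c·α|], equals S_{w·c·α}, provided every occurrence of w·c in S extends to an occurrence of w·c·α. -/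
def occursAt {α : Type*} (S P : List α) (i : ℕ) : Prop := P <+: S.drop i

instance {α : Type*} [DecidableEq α] (S P : List α) (i : ℕ) : Decidable (occursAt S P i) :=
  inferInstanceAs (Decidable (P <+: S.drop i))

/-- The starting positions of occurrences of `w` in `S`, stably sorted by label. -/
def sortedOcc {α : Type*} [DecidableEq α] (S : List α) (ℓ : ℕ → ℕ) (w : List α) : List ℕ :=
  ((List.range S.length).filter (fun i => decide (occursAt S w i))).mergeSort
    (fun i j => decide (ℓ i < ℓ j ∨ (ℓ i = ℓ j ∧ i ≤ j)))

/-- `S_w`: the characters following occurrences of `w` in `S` (the sentinel `d` when the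
occurrence reaches the end of `S`), listed sorted by the labels of those occurrences. -/
def Sw {α : Type*} [DecidableEq α] (S : List α) (ℓ : ℕ → ℕ) (d : α) (w : List α) : List α :=
  (sortedOcc S ℓ w).map (fun i => S.getD (i + w.length) d)

/- Sorting by label with ties broken by position is sorting by a linear order, so a sorted list
is determined by its elements. Filtering `sortedOcc S ℓ w` by the next character being `c` gives a
sorted list whose elements are the occurrences of `w ++ [c]` (a sentinel `d ≠ c` read past the end
of `S` never counts as `c`), and these are the occurrences of `w ++ c :: t`. -/

namespace List

variable {α : Type*}

theorem append_singleton_prefix_iff {L w : List α} {c : α} :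
    w ++ [c] <+: L ↔ w <+: L ∧ L[w.length]? = some c := by
  constructor
  · rintro ⟨r, rfl⟩
    exact ⟨⟨c :: r, by simp⟩, by simp⟩
  · rintro ⟨⟨r, rfl⟩, h⟩
    cases r with
    | nil => simp at h
    | cons x r => exact ⟨r, by simp_all⟩

theorem filter_mergeSort {le : α → α → Bool}
    (trans : ∀ a b c, le a b → le b c → le a c) (total : ∀ a b, le a b || le b a)
    (antisymm : ∀ a b, le a b → le b a → a = b) (p : α → Bool) (l : List α) :
    (l.mergeSort le).filter p = (l.filter p).mergeSort le :=
  (((mergeSort_perm l le).filter p).trans (mergeSort_perm _ le).symm).eq_of_pairwise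
    (fun a b _ _ => antisymm a b) ((pairwise_mergeSort trans total l).filter p)
    (pairwise_mergeSort trans total _)

end List

theorem occursAt_append_singleton_iff {α : Type*} {S w : List α} {c : α} {i : ℕ} :
    occursAt S (w ++ [c]) i ↔ occursAt S w i ∧ S[i + w.length]? = some c := by
  rw [occursAt, List.append_singleton_prefix_iff, List.getElem?_drop]
  rfl

theorem occursAt_append_cons_iff {α : Type*} {S w t : List α} {c d : α} (hc : c ≠ d)
    (hext : ∀ i, occursAt S (w ++ [c]) i → occursAt S (w ++ c :: t) i) (i : ℕ) :
    occursAt S (w ++ c :: t) i ↔ occursAt S w i ∧ S.getD (i + w.length) d = c := by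
  have hprefix : w ++ [c] <+: w ++ c :: t := ⟨t, by simp⟩
  have hnext : S.getD (i + w.length) d = c ↔ S[i + w.length]? = some c := by
    simp [List.getD_eq_getElem?_getD, Option.getD_eq_iff, hc.symm]
  rw [hnext, ← occursAt_append_singleton_iff]
  exact ⟨hprefix.trans, hext i⟩

theorem sortedOcc_eq_filter {α : Type*} [DecidableEq α] (S : List α) (ℓ : ℕ → ℕ)
    {v w : List α} {p : ℕ → Bool} (h : ∀ i, occursAt S v i ↔ occursAt S w i ∧ p i) :
    sortedOcc S ℓ v = (sortedOcc S ℓ w).filter p := by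
  rw [sortedOcc, sortedOcc, List.filter_mergeSort, List.filter_filter]
  · congr 1
    refine List.filter_congr fun i _ => ?_
    simp [h i, and_comm]
  all_goals
    intros
    simp_all only [decide_eq_true_eq, Bool.or_eq_true]
    omega

/-- taking the subsequence of `S_w` consisting of its occurrences of `c` and
replacing each such character `S[i+|w|] = c` by `S[i+|w|+|c·t|]` yields `S_{w·c·t}`,
provided every occurrence of `w·c` extends to an occurrence of `w·c·t`. -/
theorem stmt5 {α : Type*} [DecidableEq α] (S : List α) (ℓ : ℕ → ℕ) (d : α)
    (w : List α) (c : α) (t : List α) (hc : c ≠ d)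
    (hext : ∀ i, occursAt S (w ++ [c]) i → occursAt S (w ++ c :: t) i) :
    ((sortedOcc S ℓ w).filter (fun i => decide (S.getD (i + w.length) d = c))).map
        (fun i => S.getD (i + (w ++ c :: t).length) d)
      = Sw S ℓ d (w ++ c :: t) := by
  have hocc (i : ℕ) :
      occursAt S (w ++ c :: t) i ↔ occursAt S w i ∧ decide (S.getD (i + w.length) d = c) := by
    simpa only [decide_eq_true_eq] using occursAt_append_cons_iff hc hext i
  rw [Sw, sortedOcc_eq_filter S ℓ hocc]
end

section
/- Reduction of gapped indexing to substring range counting: fix d ≥ 0 and a string S of length n with a unique sentinel. Assign to position i + d + 1 (for each valid i) the label equal to the lexicographic rank of the reversed prefix (S[1..i])ᴿ among all reversed prefixes of S; assign label 0 to positions i ≤ d+1. Then for patterns P₁, P₂, the number of positions i such that P₁ occurs ending at position i and P₂ occurs starting at position i + d + 1 equals the substring-range count of P₂ with label interval [ℓ_lo, ℓ_hi], where [ℓ_lo, ℓ_hi] is the interval of ranks of reversed prefixes of S having P₁ᴿ as a prefix. -/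
/-- The reversed prefix of `S` ending at (0-indexed) position `i`. -/
def revPref {α : Type*} (S : List α) (i : ℕ) : List α := (S.take (i + 1)).reverse

/-- The lexicographic rank (1-based) of the reversed prefix ending at position `i` among all
reversed prefixes of `S`. -/
def rpRank {α : Type*} [LinearOrder α] (S : List α) (i : ℕ) : ℕ :=
  ((Finset.range S.length).filter (fun j => revPref S j ≤ revPref S i)).card

/-- The label of position `p`: the rank of the reversed prefix ending `d+1` positions
earlier, or `0` when there is no such prefix. -/
def gapLabel {α : Type*} [LinearOrder α] (S : List α) (d p : ℕ) : ℕ :=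
  if d + 1 ≤ p then rpRank S (p - d - 1) else 0

/-- reduction of gapped indexing to substring range counting: the number of
positions `i` where `P₁` ends at `i` and `P₂` starts at `i + d + 1` equals the substring-range
count of `P₂` over the rank interval `[lo,hi]` of reversed prefixes having `P₁ᴿ` as prefix. -/
theorem stmt10 {α : Type*} [LinearOrder α] (S P₁ P₂ : List α) (d lo hi : ℕ)
    (hP₂ : P₂ ≠ []) (hlo : 1 ≤ lo)
    (hlohi : ∀ i < S.length,
      (P₁.reverse <+: revPref S i ↔ lo ≤ rpRank S i ∧ rpRank S i ≤ hi)) :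
    ((Finset.range S.length).filter
        (fun i => P₁.reverse <+: revPref S i ∧ occursAt S P₂ (i + d + 1))).card
      = ((Finset.range S.length).filter
        (fun p => occursAt S P₂ p ∧ lo ≤ gapLabel S d p ∧ gapLabel S d p ≤ hi)).card := by
  apply Finset.card_bij (fun i _ => i + d + 1)
  · intro i hi
    simp only [Finset.mem_filter, Finset.mem_range] at hi ⊢
    obtain ⟨hilen, hpref, hocc⟩ := hi
    have hplen : i + d + 1 < S.length := by
      by_contra h
      push_neg at h
      have : S.drop (i + d + 1) = [] := List.drop_eq_nil_of_le h
      rw [occursAt, this, List.prefix_nil] at hocc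
      exact hP₂ hocc
    have hd : d + 1 ≤ i + d + 1 := by omega
    have hsub : i + d + 1 - d - 1 = i := by omega
    have := (hlohi i hilen).mp hpref
    refine ⟨hplen, hocc, ?_, ?_⟩ <;> simp [gapLabel, hd, hsub, this.1, this.2]
  · intro a ha b hb h
    omega
  · intro p hp
    simp only [Finset.mem_filter, Finset.mem_range] at hp
    obtain ⟨hplen, hocc, hl, hh⟩ := hp
    have hd : d + 1 ≤ p := by
      by_contra h
      simp [gapLabel, h] at hl
      omega
    refine ⟨p - d - 1, ?_, by omega⟩
    simp only [Finset.mem_filter, Finset.mem_range]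
    have hilen : p - d - 1 < S.length := by omega
    simp only [gapLabel, if_pos hd] at hl hh
    have hsub : p - d - 1 + d + 1 = p := by omega
    exact ⟨hilen, (hlohi _ hilen).mpr ⟨hl, hh⟩, by rw [hsub]; exact hocc⟩
end
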